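/- arXiv:0907.3381 — 3 statements merged into one kernel-verified Lean document; each statement's English description precedes it below -/
import Mathlib

section
/- Let U be a nonnegative random variable and let v = E[(1+U)^{-1}]. Then for every t ≥ 0, E[e^{-tU}] ≥ (v/2)·e^{-t(2-v)/v}. -/
/-!
On the event `{U ≤ c}` we have `e^{-tU} ≥ e^{-tc}`, so it suffices to show that this event has
probability at least `v/2` for `c = (2 - v)/v`. Since `(1+U)⁻¹ ≤ 1` everywhere and
`(1+U)⁻¹ < (1+c)⁻¹ = v/2` off the event, `v ≤ P(U ≤ c) + v/2`.
-/

open MeasureTheory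

section

variable {Ω : Type*} [MeasurableSpace Ω] {μ : Measure Ω} {U : Ω → ℝ}

lemma integrable_inv_one_add [IsFiniteMeasure μ] (hU : Measurable U) (hUpos : ∀ ω, 0 ≤ U ω) :
    Integrable (fun ω => (1 + U ω)⁻¹) μ := by
  refine .of_bound (measurable_const.add hU).inv.aestronglyMeasurable 1 (.of_forall fun ω => ?_)
  rw [Real.norm_of_nonneg (inv_nonneg.2 (by linarith [hUpos ω]))]
  exact inv_le_one_of_one_le₀ (by linarith [hUpos ω])

lemma integrable_exp_neg_mul [IsFiniteMeasure μ] (hU : Measurable U) (hUpos : ∀ ω, 0 ≤ U ω)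
    {t : ℝ} (ht : 0 ≤ t) : Integrable (fun ω => Real.exp (-t * U ω)) μ := by
  refine .of_bound (measurable_const.mul hU).exp.aestronglyMeasurable 1 (.of_forall fun ω => ?_)
  rw [Real.norm_of_nonneg (Real.exp_pos _).le, Real.exp_le_one_iff]
  nlinarith [hUpos ω]

lemma integral_inv_one_add_le [IsProbabilityMeasure μ] (hU : Measurable U)
    (hUpos : ∀ ω, 0 ≤ U ω) {c : ℝ} (hc : -1 < c) :
    ∫ ω, (1 + U ω)⁻¹ ∂μ ≤ μ.real {ω | U ω ≤ c} + (1 + c)⁻¹ := by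
  have hA : MeasurableSet {ω | U ω ≤ c} := measurableSet_le hU measurable_const
  have hbound : ∀ ω, (1 + U ω)⁻¹ ≤ {ω | U ω ≤ c}.indicator 1 ω + (1 + c)⁻¹ := by
    intro ω
    by_cases hω : U ω ≤ c
    · rw [Set.indicator_of_mem (s := {ω | U ω ≤ c}) hω, Pi.one_apply]
      have := inv_le_one_of_one_le₀ (by linarith [hUpos ω] : (1 : ℝ) ≤ 1 + U ω)
      have := inv_pos.2 (by linarith : 0 < 1 + c)
      linarith
    · rw [Set.indicator_of_notMem (s := {ω | U ω ≤ c}) hω, zero_add]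
      exact inv_anti₀ (by linarith) (by linarith)
  calc ∫ ω, (1 + U ω)⁻¹ ∂μ
      ≤ ∫ ω, ({ω | U ω ≤ c}.indicator 1 ω + (1 + c)⁻¹) ∂μ :=
        integral_mono (integrable_inv_one_add hU hUpos)
          (((integrable_const 1).indicator hA).add (integrable_const _)) hbound
    _ = μ.real {ω | U ω ≤ c} + (1 + c)⁻¹ := by
        rw [integral_add ((integrable_const 1).indicator hA) (integrable_const _),
          integral_indicator_one hA, integral_const, probReal_univ, one_smul]

lemma exp_neg_mul_mul_measureReal_le_integral_exp_neg_mul [IsFiniteMeasure μ] (hU : Measurable U)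
    (hUpos : ∀ ω, 0 ≤ U ω) {t : ℝ} (ht : 0 ≤ t) (c : ℝ) :
    Real.exp (-t * c) * μ.real {ω | U ω ≤ c} ≤ ∫ ω, Real.exp (-t * U ω) ∂μ := by
  have hsub : {ω | U ω ≤ c} ⊆ {ω | Real.exp (-t * c) ≤ Real.exp (-t * U ω)} := fun ω hω => by
    simp only [Set.mem_ofPred_eq, Real.exp_le_exp] at hω ⊢
    nlinarith
  calc Real.exp (-t * c) * μ.real {ω | U ω ≤ c}
      ≤ Real.exp (-t * c) * μ.real {ω | Real.exp (-t * c) ≤ Real.exp (-t * U ω)} :=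
        mul_le_mul_of_nonneg_left (measureReal_mono hsub) (Real.exp_pos _).le
    _ ≤ ∫ ω, Real.exp (-t * U ω) ∂μ :=
        mul_meas_ge_le_integral_of_nonneg (.of_forall fun ω => (Real.exp_pos _).le)
          (integrable_exp_neg_mul hU hUpos ht) _

end

/-- Lemma (Chatterjee): if `U ≥ 0` and `v = E[(1+U)⁻¹]`, then for every `t ≥ 0`,
`E[e^{-tU}] ≥ (v/2)·e^{-t(2-v)/v}`. -/
theorem stmt_0 {Ω : Type*} [MeasurableSpace Ω] (μ : Measure Ω) [IsProbabilityMeasure μ]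
    (U : Ω → ℝ) (hU : Measurable U) (hUpos : ∀ ω, 0 ≤ U ω)
    (v : ℝ) (hv : v = ∫ ω, (1 + U ω)⁻¹ ∂μ)
    (t : ℝ) (ht : 0 ≤ t) :
    (v / 2) * Real.exp (-t * (2 - v) / v) ≤ ∫ ω, Real.exp (-t * U ω) ∂μ := by
  rcases le_or_gt v 0 with hv0 | hv0
  · exact (mul_nonpos_of_nonpos_of_nonneg (by linarith) (Real.exp_pos _).le).trans
      (integral_nonneg fun ω => (Real.exp_pos _).le)
  set c := (2 - v) / v
  have hc : 1 + c = 2 / v := by simp only [c]; field_simp; ring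
  have hprob : v / 2 ≤ μ.real {ω | U ω ≤ c} := by
    have := integral_inv_one_add_le (μ := μ) hU hUpos (c := c)
      (by linarith [show 0 < 2 / v by positivity])
    rw [← hv, hc, inv_div] at this
    linarith
  calc v / 2 * Real.exp (-t * (2 - v) / v)
      = v / 2 * Real.exp (-t * c) := by rw [mul_div_assoc]
    _ ≤ Real.exp (-t * c) * μ.real {ω | U ω ≤ c} := by
        rw [mul_comm]; gcongr
    _ ≤ ∫ ω, Real.exp (-t * U ω) ∂μ :=
        exp_neg_mul_mul_measureReal_le_integral_exp_neg_mul hU hUpos ht c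
end

section
/- Let X = (X_1,…,X_n) be a vector of independent random variables, X' an independent copy, and for A ⊆ [n] let X^A agree with X' on A and with X off A. For f : ℝ^n → ℝ with E[f(X)²] < ∞, define Δ_i f^A := f(X^A) − f(X^{A∪{i}}) for i ∉ A. Then for all i ∉ A, E[Δ_i f · Δ_i f^A] ≥ 0, and if A ⊆ B ⊆ [n]∖{i} then E[Δ_i f · Δ_i f^A] ≥ E[Δ_i f · Δ_i f^B]. -/
open MeasureTheory ProbabilityTheory

/-- `perturbedVec X X' A ω` agrees with the independent copy `X'` on coordinates in `A`
and with `X` elsewhere. -/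
def perturbedVec {Ω : Type*} (n : ℕ) (X X' : Fin n → Ω → ℝ) (A : Finset (Fin n))
    (ω : Ω) : Fin n → ℝ :=
  fun i => if i ∈ A then X' i ω else X i ω

/-!
Let `Φ_C` be `Δ_i f` with the coordinates `X_j`, `j ∈ C`, integrated out. For `C ⊆ S` and
`i ∉ S`, the factor `Δ_i f^S` does not see `X_C`, so integrating out `X_C` turns
`E[Δ_i f · Δ_i f^S]` into `E[Φ_C · Δ_i f^S]`; then `Φ_C` does not see `X'_S`, and integrating out
`X'_S` turns `Δ_i f^S` into `Φ_S`, by the symmetry between `X_S` and `X'_S`. Hence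
`E[Δ_i f · Δ_i f^S] = E[Φ_C Φ_S]`, so `E[Δ_i f · Δ_i f^A] = E[Φ_A²] ≥ 0` and
`E[Δ_i f · Δ_i f^A] - E[Δ_i f · Δ_i f^B] = E[(Φ_A - Φ_B)²] ≥ 0`.
All of this is computed on the law `(⊗ⱼ ν_j) ⊗ (⊗ⱼ ν_j)` of `(X, X')`, `ν_j` being the law of `X_j`.
-/

namespace MeasureTheory

variable {ι : Type*} [Fintype ι] [DecidableEq ι] {α : ι → Type*} [∀ i, MeasurableSpace (α i)]
  (μ : ∀ i, Measure (α i))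

/-- Bochner analogue of `lmarginal`, realised by resampling the coordinates in `s`. -/
noncomputable def marginal (s : Finset ι) (G : (∀ i, α i) → ℝ) (y : ∀ i, α i) : ℝ :=
  ∫ z, G (s.piecewise z y) ∂Measure.pi μ

variable {μ}

theorem marginal_mul_of_dependsOn {G H : (∀ i, α i) → ℝ} {s : Finset ι}
    (hH : DependsOn H (↑s)ᶜ) : marginal μ s (G * H) = marginal μ s G * H := by
  funext y
  simp only [marginal, Pi.mul_apply, ← integral_mul_const]
  congr with z
  rw [hH fun i hi => Finset.piecewise_eq_of_notMem _ _ _ hi]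

theorem _root_.DependsOn.marginal {G : (∀ i, α i) → ℝ} {t : Set ι} (hG : DependsOn G t)
    (s : Finset ι) : DependsOn (marginal μ s G) (t \ s) := by
  intro x y hxy
  refine integral_congr_ae (.of_forall fun z => hG fun i hi => ?_)
  by_cases his : i ∈ s
  · simp [his]
  · simp [his, hxy i ⟨hi, his⟩]

omit [Fintype ι] in
theorem measurable_piecewise_prod (s : Finset ι) :
    Measurable fun p : (∀ i, α i) × (∀ i, α i) => s.piecewise p.1 p.2 := by
  refine measurable_pi_lambda _ fun i => ?_
  by_cases hi : i ∈ s
  · simp only [Finset.piecewise, hi, if_true]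
    exact (measurable_pi_apply i).comp measurable_fst
  · simp only [Finset.piecewise, hi, if_false]
    exact (measurable_pi_apply i).comp measurable_snd

variable [∀ i, IsProbabilityMeasure (μ i)]

variable (μ) in
theorem measurePreserving_piecewise (s : Finset ι) :
    MeasurePreserving (fun p : (∀ i, α i) × (∀ i, α i) => s.piecewise p.1 p.2)
      ((Measure.pi μ).prod (Measure.pi μ)) (Measure.pi μ) where
  measurable := measurable_piecewise_prod s
  map_eq := by
    refine (Measure.pi_eq fun S hS => ?_).symm
    rw [Measure.map_apply (measurable_piecewise_prod s) (.univ_pi hS)]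
    have hbox : (fun p : (∀ i, α i) × (∀ i, α i) => s.piecewise p.1 p.2) ⁻¹' Set.univ.pi S =
        Set.univ.pi (s.piecewise S fun _ => Set.univ) ×ˢ
          Set.univ.pi (s.piecewise (fun _ => Set.univ) S) := by
      ext p
      simp only [Set.mem_preimage, Set.mem_pi, Set.mem_univ, true_implies, Set.mem_prod,
        Finset.piecewise, ← forall_and]
      refine forall_congr' fun i => ?_
      by_cases hi : i ∈ s <;> simp [hi]
    rw [hbox, Measure.prod_prod, Measure.pi_pi, Measure.pi_pi, ← Finset.prod_mul_distrib]
    refine Finset.prod_congr rfl fun i _ => ?_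
    by_cases hi : i ∈ s <;> simp [hi]

theorem integrable_marginal {G : (∀ i, α i) → ℝ} (hG : Integrable G (Measure.pi μ))
    (s : Finset ι) : Integrable (marginal μ s G) (Measure.pi μ) :=
  ((measurePreserving_piecewise μ s).integrable_comp_of_integrable hG).integral_prod_right

theorem integral_marginal {G : (∀ i, α i) → ℝ} (hG : Integrable G (Measure.pi μ))
    (s : Finset ι) : ∫ y, marginal μ s G y ∂Measure.pi μ = ∫ y, G y ∂Measure.pi μ := by
  have hP := measurePreserving_piecewise μ s
  calc ∫ y, marginal μ s G y ∂Measure.pi μ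
      = ∫ p, G (s.piecewise p.1 p.2) ∂(Measure.pi μ).prod (Measure.pi μ) :=
        (integral_prod_symm _ (hP.integrable_comp_of_integrable hG)).symm
    _ = ∫ y, G y ∂Measure.pi μ := by
        rw [← integral_map hP.measurable.aemeasurable (by rw [hP.map_eq]; exact hG.1),
          hP.map_eq]

theorem integrable_marginal_mul {G H : (∀ i, α i) → ℝ} {s : Finset ι}
    (hGH : Integrable (G * H) (Measure.pi μ)) (hH : DependsOn H (↑s)ᶜ) :
    Integrable (marginal μ s G * H) (Measure.pi μ) :=
  marginal_mul_of_dependsOn hH ▸ integrable_marginal hGH s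

theorem integral_marginal_mul {G H : (∀ i, α i) → ℝ} {s : Finset ι}
    (hGH : Integrable (G * H) (Measure.pi μ)) (hH : DependsOn H (↑s)ᶜ) :
    ∫ y, (marginal μ s G * H) y ∂Measure.pi μ = ∫ y, (G * H) y ∂Measure.pi μ :=
  marginal_mul_of_dependsOn hH ▸ integral_marginal hGH s

end MeasureTheory

section SumComm

variable {ι E : Type*} [MeasurableSpace E]

@[simp]
theorem piCongrLeft_sumComm_apply (z : ι ⊕ ι → E) (t : ι ⊕ ι) :
    MeasurableEquiv.piCongrLeft (fun _ => E) (Equiv.sumComm ι ι) z t = z t.swap := by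
  conv_lhs => rw [← Sum.swap_swap t]
  exact MeasurableEquiv.piCongrLeft_apply_apply (β := fun _ => E) (Equiv.sumComm ι ι) z t.swap

instance isProbabilityMeasure_sumElim (ν ν' : ι → Measure E) [∀ i, IsProbabilityMeasure (ν i)]
    [∀ i, IsProbabilityMeasure (ν' i)] : ∀ t, IsProbabilityMeasure (Sum.elim ν ν' t) := by
  rintro (j | j)
  exacts [inferInstanceAs (IsProbabilityMeasure (ν j)),
    inferInstanceAs (IsProbabilityMeasure (ν' j))]

theorem measurePreserving_piCongrLeft_sumComm [Fintype ι] (ν : ι → Measure E)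
    [∀ i, IsProbabilityMeasure (ν i)] :
    MeasurePreserving (MeasurableEquiv.piCongrLeft (fun _ => E) (Equiv.sumComm ι ι))
      (Measure.pi (Sum.elim ν ν)) (Measure.pi (Sum.elim ν ν)) := by
  have h := measurePreserving_piCongrLeft (α := fun _ => E) (Sum.elim ν ν) (Equiv.sumComm ι ι)
  rwa [show (fun t => Sum.elim ν ν (Equiv.sumComm ι ι t)) = Sum.elim ν ν from
    funext (by rintro (j | j) <;> rfl)] at h

end SumComm

section Perturbation

variable {ι : Type*} [Fintype ι] [DecidableEq ι] {E : Type*}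

/-- On the doubled coordinates `y : ι ⊕ ι → E`, the left copy plays `X` and the right copy `X'`;
`perturb T y` is `X^T`. -/
def perturb (T : Finset ι) (y : ι ⊕ ι → E) : ι → E :=
  T.piecewise (fun j => y (.inr j)) (fun j => y (.inl j))

/-- `Δ_i f^S`. -/
def perturbDiff (f : (ι → E) → ℝ) (i : ι) (S : Finset ι) (y : ι ⊕ ι → E) : ℝ :=
  f (perturb S y) - f (perturb (insert i S) y)

theorem dependsOn_perturbDiff (f : (ι → E) → ℝ) (i : ι) (S : Finset ι) :
    DependsOn (perturbDiff f i S) ↑(Sᶜ.disjSum (insert i S)) := by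
  intro x y hxy
  have hperturb : ∀ T, S ⊆ T → T ⊆ insert i S → perturb T x = perturb T y := by
    intro T hST hTi
    funext j
    by_cases hj : j ∈ T
    · rw [perturb, perturb, Finset.piecewise_eq_of_mem _ _ _ hj,
        Finset.piecewise_eq_of_mem _ _ _ hj]
      exact hxy _ (Finset.inr_mem_disjSum.2 (hTi hj))
    · rw [perturb, perturb, Finset.piecewise_eq_of_notMem _ _ _ hj,
        Finset.piecewise_eq_of_notMem _ _ _ hj]
      exact hxy _ (Finset.inl_mem_disjSum.2 (Finset.mem_compl.2 fun h => hj (hST h)))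
  simp only [perturbDiff, hperturb S le_rfl (Finset.subset_insert i S),
    hperturb (insert i S) (Finset.subset_insert i S) le_rfl]

variable [MeasurableSpace E] (ν : ι → Measure E) [∀ i, IsProbabilityMeasure (ν i)]

theorem measurePreserving_perturb (T : Finset ι) :
    MeasurePreserving (perturb T) (Measure.pi (Sum.elim ν ν)) (Measure.pi ν) :=
  (measurePreserving_piecewise ν T).comp
    (Measure.measurePreserving_swap.comp (measurePreserving_sumPiEquivProdPi (Sum.elim ν ν)))

/-- `E[Δ_i f | X_j (j ∉ C), X']`: the coordinates of `X` in `C` are integrated out. -/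
noncomputable def condPerturbDiff (f : (ι → E) → ℝ) (i : ι) (C : Finset ι) :
    (ι ⊕ ι → E) → ℝ :=
  marginal (Sum.elim ν ν) (C.disjSum ∅) (perturbDiff f i ∅)

theorem marginal_perturbDiff_eq_condPerturbDiff (f : (ι → E) → ℝ) {i : ι} {S : Finset ι}
    (hiS : i ∉ S) :
    marginal (Sum.elim ν ν) ((∅ : Finset ι).disjSum S) (perturbDiff f i S) =
      condPerturbDiff ν f i S := by
  funext y
  -- swapping the two copies turns resampling `X'_S` into resampling `X_S`
  rw [condPerturbDiff, marginal, marginal,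
    ← (measurePreserving_piCongrLeft_sumComm ν).integral_comp']
  refine integral_congr_ae (.of_forall fun z => ?_)
  have h : ∀ T, T ⊆ {i} → perturb (T ∪ S) (((∅ : Finset ι).disjSum S).piecewise
      (MeasurableEquiv.piCongrLeft (fun _ => E) (Equiv.sumComm ι ι) z) y) =
      perturb T ((S.disjSum ∅).piecewise z y) := by
    intro T hT
    funext j
    by_cases hjS : j ∈ S
    · have hjT : j ∉ T := fun h => hiS (Finset.mem_singleton.1 (hT h) ▸ hjS)
      simp [perturb, Finset.piecewise, hjS, hjT]
    · simp [perturb, Finset.piecewise, hjS]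
  have h₀ := h ∅ (Finset.empty_subset _)
  have h₁ := h {i} le_rfl
  rw [Finset.empty_union] at h₀
  rw [← Finset.insert_eq] at h₁
  simp only [perturbDiff, Finset.insert_empty, h₀, h₁]

variable {ν}

theorem integrable_and_integral_condPerturbDiff_mul {f : (ι → E) → ℝ} {i : ι}
    {C S : Finset ι} (hCS : C ⊆ S) (hiS : i ∉ S)
    (hmul : Integrable (perturbDiff f i ∅ * perturbDiff f i S) (Measure.pi (Sum.elim ν ν))) :
    Integrable (condPerturbDiff ν f i C * condPerturbDiff ν f i S) (Measure.pi (Sum.elim ν ν)) ∧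
      ∫ y, (condPerturbDiff ν f i C * condPerturbDiff ν f i S) y ∂Measure.pi (Sum.elim ν ν) =
        ∫ y, (perturbDiff f i ∅ * perturbDiff f i S) y ∂Measure.pi (Sum.elim ν ν) := by
  have hS : DependsOn (perturbDiff f i S) (↑(C.disjSum (∅ : Finset ι)) : Set (ι ⊕ ι))ᶜ := by
    refine (dependsOn_perturbDiff f i S).mono ?_
    rintro (j | j) hj hjC
    · exact Finset.mem_compl.1 (Finset.inl_mem_disjSum.1 hj) (hCS (Finset.inl_mem_disjSum.1 hjC))
    · exact Finset.notMem_empty j (Finset.inr_mem_disjSum.1 hjC)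
  have hC : DependsOn (condPerturbDiff ν f i C) (↑((∅ : Finset ι).disjSum S) : Set (ι ⊕ ι))ᶜ := by
    refine ((dependsOn_perturbDiff f i ∅).marginal _).mono ?_
    rintro (j | j) ⟨hj, -⟩ hjS
    · exact Finset.notMem_empty j (Finset.inl_mem_disjSum.1 hjS)
    · rw [Finset.mem_singleton.1 (Finset.inr_mem_disjSum.1 hj)] at hjS
      exact hiS (Finset.inr_mem_disjSum.1 hjS)
  have hmulC : Integrable (perturbDiff f i S * condPerturbDiff ν f i C)
      (Measure.pi (Sum.elim ν ν)) :=
    mul_comm (condPerturbDiff ν f i C) _ ▸ integrable_marginal_mul hmul hS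
  have hmulCS := integrable_marginal_mul hmulC hC
  have heqCS := integral_marginal_mul hmulC hC
  rw [marginal_perturbDiff_eq_condPerturbDiff ν f hiS] at hmulCS heqCS
  refine ⟨mul_comm (condPerturbDiff ν f i S) _ ▸ hmulCS, ?_⟩
  rw [mul_comm (condPerturbDiff ν f i C), heqCS, mul_comm (perturbDiff f i S)]
  exact integral_marginal_mul hmul hS

theorem integrable_perturbDiff_mul {f : (ι → E) → ℝ} (hf : MemLp f 2 (Measure.pi ν))
    (i : ι) (S T : Finset ι) :
    Integrable (perturbDiff f i S * perturbDiff f i T) (Measure.pi (Sum.elim ν ν)) := by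
  have hΔ : ∀ S, MemLp (perturbDiff f i S) 2 (Measure.pi (Sum.elim ν ν)) := fun S =>
    (hf.comp_measurePreserving (measurePreserving_perturb ν S)).sub
      (hf.comp_measurePreserving (measurePreserving_perturb ν (insert i S)))
  exact (hΔ S).integrable_mul (hΔ T)

theorem integral_perturbDiff_mul_nonneg {f : (ι → E) → ℝ} (hf : MemLp f 2 (Measure.pi ν))
    {i : ι} {A : Finset ι} (hiA : i ∉ A) :
    0 ≤ ∫ y, (perturbDiff f i ∅ * perturbDiff f i A) y ∂Measure.pi (Sum.elim ν ν) := by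
  rw [← (integrable_and_integral_condPerturbDiff_mul le_rfl hiA
    (integrable_perturbDiff_mul hf i ∅ A)).2]
  exact integral_nonneg fun y => mul_self_nonneg _

theorem integral_perturbDiff_mul_le_of_subset {f : (ι → E) → ℝ}
    (hf : MemLp f 2 (Measure.pi ν)) {i : ι} {A B : Finset ι} (hAB : A ⊆ B) (hiB : i ∉ B) :
    ∫ y, (perturbDiff f i ∅ * perturbDiff f i B) y ∂Measure.pi (Sum.elim ν ν) ≤
      ∫ y, (perturbDiff f i ∅ * perturbDiff f i A) y ∂Measure.pi (Sum.elim ν ν) := by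
  obtain ⟨hAA, eAA⟩ := integrable_and_integral_condPerturbDiff_mul le_rfl
    (fun h => hiB (hAB h)) (integrable_perturbDiff_mul hf i ∅ A)
  obtain ⟨hAB', eAB⟩ := integrable_and_integral_condPerturbDiff_mul hAB hiB
    (integrable_perturbDiff_mul hf i ∅ B)
  obtain ⟨hBB, eBB⟩ := integrable_and_integral_condPerturbDiff_mul le_rfl hiB
    (integrable_perturbDiff_mul hf i ∅ B)
  set ΦA := condPerturbDiff ν f i A
  set ΦB := condPerturbDiff ν f i B
  have hsq : 0 ≤ ∫ y, ((ΦA - ΦB) * (ΦA - ΦB)) y ∂Measure.pi (Sum.elim ν ν) :=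
    integral_nonneg fun y => mul_self_nonneg _
  rw [show (ΦA - ΦB) * (ΦA - ΦB) = (ΦA * ΦA - ΦA * ΦB) - (ΦA * ΦB - ΦB * ΦB) by ring,
    integral_sub' (hAA.sub hAB') (hAB'.sub hBB), integral_sub' hAA hAB', integral_sub' hAB' hBB,
    eAA, eAB, eBB] at hsq
  linarith

end Perturbation

theorem map_sumElim_eq_pi {ι Ω E : Type*} [Fintype ι] [MeasurableSpace Ω] [MeasurableSpace E]
    {μ : Measure Ω} [IsProbabilityMeasure μ] {X X' : ι → Ω → E}
    (hX : ∀ i, Measurable (X i)) (hX' : ∀ i, Measurable (X' i))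
    (hindep : iIndepFun (Sum.elim X X') μ) (hident : ∀ i, IdentDistrib (X i) (X' i) μ μ) :
    μ.map (fun ω t => Sum.elim X X' t ω) =
      Measure.pi (Sum.elim (fun i => μ.map (X i)) (fun i => μ.map (X i))) := by
  rw [hindep.map_fun_eq_pi_map
    (by rintro (i | i); exacts [(hX i).aemeasurable, (hX' i).aemeasurable])]
  congr 1
  funext t
  rcases t with i | i
  · rfl
  · exact (hident i).map_eq.symm

/-- For independent `X_1,…,X_n` with independent copy `X'`, `f` square integrable, and
`Δ_i f^A = f(X^A) − f(X^{A∪{i}})` (for `i ∉ A`): `E[Δ_i f · Δ_i f^A] ≥ 0`, and this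
quantity is nonincreasing in `A`: if `A ⊆ B ⊆ [n]∖{i}` then
`E[Δ_i f · Δ_i f^B] ≤ E[Δ_i f · Δ_i f^A]`. -/
theorem stmt_16 {Ω : Type*} [MeasurableSpace Ω] (μ : Measure Ω) [IsProbabilityMeasure μ]
    (n : ℕ) (X X' : Fin n → Ω → ℝ)
    (hmX : ∀ i, Measurable (X i)) (hmX' : ∀ i, Measurable (X' i))
    (hindep : iIndepFun (m := fun _ : Fin n ⊕ Fin n => (inferInstance : MeasurableSpace ℝ))
      (Sum.elim X X') μ)
    (hident : ∀ i, IdentDistrib (X i) (X' i) μ μ)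
    (f : (Fin n → ℝ) → ℝ) (hf : Measurable f)
    (hL2 : MemLp (fun ω => f (fun i => X i ω)) 2 μ) :
    ∀ (i : Fin n) (A : Finset (Fin n)), i ∉ A →
      (0 ≤ ∫ ω, (f (perturbedVec n X X' ∅ ω) - f (perturbedVec n X X' {i} ω))
            * (f (perturbedVec n X X' A ω) - f (perturbedVec n X X' (insert i A) ω)) ∂μ) ∧
      ∀ B : Finset (Fin n), A ⊆ B → i ∉ B →
        (∫ ω, (f (perturbedVec n X X' ∅ ω) - f (perturbedVec n X X' {i} ω))
            * (f (perturbedVec n X X' B ω) - f (perturbedVec n X X' (insert i B) ω)) ∂μ)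
          ≤ ∫ ω, (f (perturbedVec n X X' ∅ ω) - f (perturbedVec n X X' {i} ω))
              * (f (perturbedVec n X X' A ω) - f (perturbedVec n X X' (insert i A) ω)) ∂μ := by
  intro i A hiA
  set ν : Fin n → Measure ℝ := fun j => μ.map (X j)
  have : ∀ j, IsProbabilityMeasure (ν j) := fun j =>
    Measure.isProbabilityMeasure_map (hmX j).aemeasurable
  have hXX : Measurable fun ω t => Sum.elim X X' t ω := by
    refine measurable_pi_lambda _ ?_
    rintro (j | j)
    exacts [hmX j, hmX' j]
  have hlaw : μ.map (fun ω t => Sum.elim X X' t ω) = Measure.pi (Sum.elim ν ν) :=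
    map_sumElim_eq_pi hmX hmX' hindep hident
  have hf2 : MemLp f 2 (Measure.pi ν) := by
    rw [← (measurePreserving_perturb ν ∅).map_eq, ← hlaw,
      Measure.map_map (measurePreserving_perturb ν ∅).measurable hXX,
      memLp_map_measure_iff hf.aestronglyMeasurable
        ((measurePreserving_perturb ν ∅).measurable.comp hXX).aemeasurable]
    exact hL2
  have htransfer : ∀ S : Finset (Fin n),
      ∫ ω, (f (perturbedVec n X X' ∅ ω) - f (perturbedVec n X X' {i} ω))
        * (f (perturbedVec n X X' S ω) - f (perturbedVec n X X' (insert i S) ω)) ∂μ =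
      ∫ y, (perturbDiff f i ∅ * perturbDiff f i S) y ∂Measure.pi (Sum.elim ν ν) := by
    intro S
    rw [← hlaw, integral_map hXX.aemeasurable
      (by rw [hlaw]; exact (integrable_perturbDiff_mul hf2 i ∅ S).1)]
    rfl
  refine ⟨?_, fun B hAB hiB => ?_⟩
  · rw [htransfer]
    exact integral_perturbDiff_mul_nonneg hf2 hiA
  · rw [htransfer, htransfer]
    exact integral_perturbDiff_mul_le_of_subset hf2 hAB hiB
end

section
/- With the notation above (X i.i.d.-perturbation setup), define T_k := Σ_{i=1}^n (1/C(n−1,k)) Σ_{A ⊆ [n]∖{i}, |A|=k} E[Δ_i f · Δ_i f^A] for 0 ≤ k ≤ n−1. Then Var(f(X)) = (1/(2n)) Σ_{k=0}^{n−1} T_k. -/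
open MeasureTheory ProbabilityTheory

/-!
Flipping the coordinates in `C` between `X` and `X'` preserves the joint law of all the perturbed
vectors `X^A` (by independence and `X_i ~ X'_i`), so `E[f(X^B) f(X^D)]` is invariant under
`B, D ↦ B ∆ C, D ∆ C`. With `C = {i}` this gives `E[Δ_i f · Δ_i f^A] = 2 E[f(X) Δ_i f^A]`. With the
Shapley weights the differences `Δ_i f^A` telescope to `n (f(X) - f(X'))`, and
`E[f(X) f(X')] = E[f(X)]²` by independence.
-/

open Finset
open scoped symmDiff

section Combinatorics

variable {α : Type*} [Fintype α] [DecidableEq α]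

lemma sum_sum_powersetCard_erase {M : Type*} [AddCommMonoid M] (k : ℕ) (h : Finset α → M) :
    ∑ i, ∑ A ∈ powersetCard k (univ.erase i), h A
      = ∑ B ∈ powersetCard k univ, (Fintype.card α - k) • h B := by
  rw [sum_comm' (t' := powersetCard k univ) (s' := fun B => Bᶜ) (by
    intro i A
    simp only [mem_univ, mem_powersetCard, subset_erase, subset_univ, true_and, mem_compl])]
  refine sum_congr rfl fun B hB => ?_
  rw [sum_const, card_compl, (mem_powersetCard.1 hB).2]

lemma sum_sum_powersetCard_erase_insert {M : Type*} [AddCommMonoid M] (k : ℕ)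
    (h : Finset α → M) :
    ∑ i, ∑ A ∈ powersetCard k (univ.erase i), h (insert i A)
      = ∑ B ∈ powersetCard (k + 1) univ, (k + 1) • h B := by
  have reindex (i : α) : ∑ A ∈ powersetCard k (univ.erase i), h (insert i A)
      = ∑ B ∈ powersetCard (k + 1) univ with i ∈ B, h B := by
    refine sum_nbij' (insert i) (fun B => B.erase i) ?_ ?_ ?_ ?_ fun _ _ => rfl
    · intro A hA
      rw [mem_powersetCard, subset_erase] at hA
      simp [card_insert_of_notMem hA.1.2, hA.2]
    · intro B hB
      rw [mem_filter, mem_powersetCard] at hB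
      simp [subset_erase, card_erase_of_mem hB.2, hB.1.2]
    · intro A hA
      exact erase_insert (subset_erase.1 (mem_powersetCard.1 hA).1).2
    · intro B hB
      exact insert_erase (mem_filter.1 hB).2
  simp_rw [reindex, sum_filter]
  rw [sum_comm]
  refine sum_congr rfl fun B hB => ?_
  rw [sum_ite_mem, univ_inter, sum_const, (mem_powersetCard.1 hB).2]

lemma cast_choose_inv_mul_sub {K : Type*} [Field K] [CharZero K] {n k : ℕ} (hk : k < n) :
    ((n - 1).choose k : K)⁻¹ * (n - k : ℕ) = n / n.choose k := by
  have h := Nat.choose_mul_succ_eq (n - 1) k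
  rw [Nat.sub_add_cancel (by omega : 1 ≤ n)] at h
  have h1 : ((n - 1).choose k : K) ≠ 0 := by exact_mod_cast (Nat.choose_pos (by omega)).ne'
  have h2 : (n.choose k : K) ≠ 0 := by exact_mod_cast (Nat.choose_pos (by omega)).ne'
  field_simp
  norm_cast; linarith [h]

lemma cast_choose_inv_mul_succ {K : Type*} [Field K] [CharZero K] {n k : ℕ} (hk : k < n) :
    ((n - 1).choose k : K)⁻¹ * (k + 1 : ℕ) = n / n.choose (k + 1) := by
  have h := Nat.add_one_mul_choose_eq (n - 1) k
  rw [Nat.sub_add_cancel (by omega : 1 ≤ n)] at h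
  have h1 : ((n - 1).choose k : K) ≠ 0 := by exact_mod_cast (Nat.choose_pos (by omega)).ne'
  have h2 : (n.choose (k + 1) : K) ≠ 0 := by exact_mod_cast (Nat.choose_pos (by omega)).ne'
  field_simp
  norm_cast; linarith [h]

-- `n` times the efficiency of the Shapley value of the game `-h`.
theorem sum_range_inv_choose_mul_sum_powersetCard_sub_insert {K : Type*} [Field K] [CharZero K]
    (h : Finset α → K) :
    ∑ k ∈ range (Fintype.card α), ∑ i, ((Fintype.card α - 1).choose k : K)⁻¹ *
        ∑ A ∈ powersetCard k (univ.erase i), (h A - h (insert i A))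
      = Fintype.card α * (h ∅ - h univ) := by
  set n := Fintype.card α
  set a : ℕ → K := fun k => n / n.choose k * ∑ B ∈ powersetCard k univ, h B
  have hstep (k : ℕ) (hk : k ∈ range n) :
      ∑ i, ((n - 1).choose k : K)⁻¹ * ∑ A ∈ powersetCard k (univ.erase i), (h A - h (insert i A))
        = a k - a (k + 1) := by
    have hk : k < n := mem_range.1 hk
    simp_rw [← mul_sum, sum_sub_distrib]
    rw [sum_sum_powersetCard_erase, sum_sum_powersetCard_erase_insert, ← smul_sum, ← smul_sum,
      nsmul_eq_mul, nsmul_eq_mul, mul_sub, ← mul_assoc, ← mul_assoc,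
      cast_choose_inv_mul_sub hk, cast_choose_inv_mul_succ hk]
  have hfull : powersetCard n univ = {(univ : Finset α)} := powersetCard_self univ
  rw [sum_congr rfl hstep, sum_range_sub']
  simp [a, hfull]
  ring

end Combinatorics

namespace ProbabilityTheory

lemma iIndepFun.identDistrib_comp_perm {Ω ι β : Type*} [MeasurableSpace Ω] [Fintype ι]
    [MeasurableSpace β] {μ : Measure Ω} {Z : ι → Ω → β} (hZ : ∀ i, Measurable (Z i))
    (h : iIndepFun Z μ) (σ : Equiv.Perm ι) (hσ : ∀ i, IdentDistrib (Z (σ i)) (Z i) μ μ) :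
    IdentDistrib (fun ω i => Z (σ i) ω) (fun ω i => Z i ω) μ μ where
  aemeasurable_fst := (measurable_pi_lambda _ fun i => hZ (σ i)).aemeasurable
  aemeasurable_snd := (measurable_pi_lambda _ hZ).aemeasurable
  map_eq := by
    rw [(h.precomp σ.injective).map_fun_eq_pi_map fun i => (hZ (σ i)).aemeasurable,
      h.map_fun_eq_pi_map fun i => (hZ i).aemeasurable]
    exact congrArg Measure.pi (funext fun i => (hσ i).map_eq)

lemma iIndepFun.indepFun_sumElim {Ω ι κ β : Type*} [MeasurableSpace Ω] [Fintype ι] [Fintype κ]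
    [MeasurableSpace β] {μ : Measure Ω} {X : ι → Ω → β} {Y : κ → Ω → β}
    (hX : ∀ i, Measurable (X i)) (hY : ∀ j, Measurable (Y j)) (h : iIndepFun (Sum.elim X Y) μ) :
    IndepFun (fun ω i => X i ω) (fun ω j => Y j ω) μ := by
  have hS := h.indepFun_finset (univ.map .inl) (univ.map .inr)
    (disjoint_left.2 (by simp)) (Sum.forall.2 ⟨hX, hY⟩)
  exact hS.comp (φ := fun v i => v ⟨.inl i, by simp⟩) (ψ := fun v j => v ⟨.inr j, by simp⟩)
    (measurable_pi_lambda _ fun _ => measurable_pi_apply _)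
    (measurable_pi_lambda _ fun _ => measurable_pi_apply _)

end ProbabilityTheory

def swapOn {ι : Type*} [DecidableEq ι] (C : Finset ι) : Equiv.Perm (ι ⊕ ι) :=
  Function.Involutive.toPerm
    (Sum.elim (fun i => if i ∈ C then .inr i else .inl i)
      (fun i => if i ∈ C then .inl i else .inr i))
    (by rintro (i | i) <;> by_cases hi : i ∈ C <;> simp [hi])

@[simp] lemma swapOn_inl {ι : Type*} [DecidableEq ι] (C : Finset ι) (i : ι) :
    swapOn C (.inl i) = if i ∈ C then .inr i else .inl i := rfl

@[simp] lemma swapOn_inr {ι : Type*} [DecidableEq ι] (C : Finset ι) (i : ι) :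
    swapOn C (.inr i) = if i ∈ C then .inl i else .inr i := rfl

lemma swapOn_swapOn {ι : Type*} [DecidableEq ι] (B C : Finset ι) (j : ι ⊕ ι) :
    swapOn C (swapOn B j) = swapOn (B ∆ C) j := by
  rcases j with i | i <;> by_cases hB : i ∈ B <;> by_cases hC : i ∈ C <;>
    simp [hB, hC, mem_symmDiff]

section Perturbation

variable {Ω : Type*} {n : ℕ} {X X' : Fin n → Ω → ℝ}

lemma perturbedVec_eq_swapOn (A : Finset (Fin n)) (ω : Ω) :
    perturbedVec n X X' A ω = fun i => Sum.elim X X' (swapOn A (.inl i)) ω := by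
  funext i
  by_cases hi : i ∈ A <;> simp [perturbedVec, hi]

lemma perturbedVec_empty (ω : Ω) : perturbedVec n X X' ∅ ω = fun i => X i ω := by
  funext i; simp [perturbedVec]

lemma perturbedVec_univ (ω : Ω) : perturbedVec n X X' univ ω = fun i => X' i ω := by
  funext i; simp [perturbedVec]

variable [MeasurableSpace Ω] {μ : Measure Ω}

def PerturbationExchangeable (μ : Measure Ω) (X X' : Fin n → Ω → ℝ) : Prop :=
  ∀ C, IdentDistrib (fun ω A => perturbedVec n X X' (A ∆ C) ω)
    (fun ω A => perturbedVec n X X' A ω) μ μ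

lemma perturbationExchangeable (hmX : ∀ i, Measurable (X i))
    (hmX' : ∀ i, Measurable (X' i)) (hindep : iIndepFun (Sum.elim X X') μ)
    (hident : ∀ i, IdentDistrib (X i) (X' i) μ μ) : PerturbationExchangeable μ X X' := by
  intro C
  have hZ : ∀ j, Measurable (Sum.elim X X' j) := Sum.forall.2 ⟨hmX, hmX'⟩
  have hswap : ∀ j, IdentDistrib (Sum.elim X X' (swapOn C j)) (Sum.elim X X' j) μ μ := by
    rintro (i | i) <;> by_cases hi : i ∈ C <;>
      simp only [swapOn_inl, swapOn_inr, hi, Sum.elim_inl, Sum.elim_inr, if_true, if_false]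
    exacts [(hident i).symm, .refl (hmX i).aemeasurable, hident i, .refl (hmX' i).aemeasurable]
  have := (hindep.identDistrib_comp_perm hZ (swapOn C) hswap).comp
    (u := fun y A i => y (swapOn A (.inl i))) (by fun_prop)
  simp only [perturbedVec_eq_swapOn]
  simpa only [Function.comp_def, swapOn_swapOn] using this

variable {f : (Fin n → ℝ) → ℝ}

lemma identDistrib_comp_perturbedVec (hexch : PerturbationExchangeable μ X X')
    (hf : Measurable f) (A : Finset (Fin n)) :
    IdentDistrib (fun ω => f (perturbedVec n X X' A ω))
      (fun ω => f (perturbedVec n X X' ∅ ω)) μ μ := by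
  simpa only [Function.comp_def, ← bot_eq_empty, bot_symmDiff] using
    (hexch A).comp (u := fun F : Finset (Fin n) → Fin n → ℝ => f (F ∅)) (by fun_prop)

lemma memLp_comp_perturbedVec (hexch : PerturbationExchangeable μ X X') (hf : Measurable f)
    (hL2 : MemLp (fun ω => f (perturbedVec n X X' ∅ ω)) 2 μ) (A : Finset (Fin n)) :
    MemLp (fun ω => f (perturbedVec n X X' A ω)) 2 μ :=
  (identDistrib_comp_perturbedVec hexch hf A).memLp_iff.2 hL2

lemma integrable_mul_perturbedVec (hexch : PerturbationExchangeable μ X X') (hf : Measurable f)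
    (hL2 : MemLp (fun ω => f (perturbedVec n X X' ∅ ω)) 2 μ) (B D : Finset (Fin n)) :
    Integrable (fun ω => f (perturbedVec n X X' B ω) * f (perturbedVec n X X' D ω)) μ :=
  (memLp_comp_perturbedVec hexch hf hL2 B).integrable_mul (memLp_comp_perturbedVec hexch hf hL2 D)

lemma integral_mul_perturbedVec_symmDiff (hexch : PerturbationExchangeable μ X X')
    (hf : Measurable f) (B C D : Finset (Fin n)) :
    ∫ ω, f (perturbedVec n X X' (B ∆ C) ω) * f (perturbedVec n X X' (D ∆ C) ω) ∂μ
      = ∫ ω, f (perturbedVec n X X' B ω) * f (perturbedVec n X X' D ω) ∂μ :=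
  ((hexch C).comp (u := fun F : Finset (Fin n) → Fin n → ℝ => f (F B) * f (F D))
    (by fun_prop)).integral_eq

lemma integral_sub_mul_sub_perturbedVec (hexch : PerturbationExchangeable μ X X')
    (hf : Measurable f) (hL2 : MemLp (fun ω => f (perturbedVec n X X' ∅ ω)) 2 μ)
    {i : Fin n} {A : Finset (Fin n)} (hiA : i ∉ A) :
    ∫ ω, (f (perturbedVec n X X' ∅ ω) - f (perturbedVec n X X' {i} ω))
        * (f (perturbedVec n X X' A ω) - f (perturbedVec n X X' (insert i A) ω)) ∂μ
      = 2 * ∫ ω, f (perturbedVec n X X' ∅ ω) * f (perturbedVec n X X' A ω) ∂μ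
        - 2 * ∫ ω, f (perturbedVec n X X' ∅ ω) * f (perturbedVec n X X' (insert i A) ω) ∂μ := by
  have hint := integrable_mul_perturbedVec hexch hf hL2
  have hsymm : A ∆ {i} = insert i A := by
    ext j; by_cases hj : j = i <;> simp [mem_symmDiff, hj, hiA]
  have hsymm' : (insert i A) ∆ {i} = A := by
    ext j; by_cases hj : j = i <;> simp [mem_symmDiff, hj, hiA]
  have swap_A := integral_mul_perturbedVec_symmDiff hexch hf {i} {i} A
  have swap_iA := integral_mul_perturbedVec_symmDiff hexch hf {i} {i} (insert i A)
  rw [symmDiff_self, bot_eq_empty, hsymm] at swap_A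
  rw [symmDiff_self, bot_eq_empty, hsymm'] at swap_iA
  simp only [sub_mul, mul_sub]
  rw [integral_sub, integral_sub, integral_sub, ← swap_A, ← swap_iA]
  · ring
  all_goals first | exact hint _ _ | exact (hint _ _).sub (hint _ _)

lemma integral_mul_perturbedVec_univ (hmX : ∀ i, Measurable (X i))
    (hmX' : ∀ i, Measurable (X' i)) (hindep : iIndepFun (Sum.elim X X') μ)
    (hexch : PerturbationExchangeable μ X X') (hf : Measurable f) :
    ∫ ω, f (perturbedVec n X X' ∅ ω) * f (perturbedVec n X X' univ ω) ∂μ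
      = (∫ ω, f (perturbedVec n X X' ∅ ω) ∂μ) ^ 2 := by
  have hsame := (identDistrib_comp_perturbedVec hexch hf univ).integral_eq
  have hind := (hindep.indepFun_sumElim hmX hmX').comp hf hf
  rw [sq]
  nth_rw 2 [← hsame]
  simp only [perturbedVec_empty, perturbedVec_univ]
  exact hind.integral_fun_mul_eq_mul_integral
    (hf.comp (measurable_pi_lambda _ hmX)).aestronglyMeasurable
    (hf.comp (measurable_pi_lambda _ hmX')).aestronglyMeasurable

end Perturbation

theorem stmt_17_general {Ω : Type*} [MeasurableSpace Ω] (μ : Measure Ω)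
    (n : ℕ) (hn : 0 < n) (X X' : Fin n → Ω → ℝ)
    (hmX : ∀ i, Measurable (X i)) (hmX' : ∀ i, Measurable (X' i))
    (hindep : iIndepFun (Sum.elim X X') μ)
    (hident : ∀ i, IdentDistrib (X i) (X' i) μ μ)
    (f : (Fin n → ℝ) → ℝ) (hf : Measurable f)
    (hL2 : MemLp (fun ω => f (fun i => X i ω)) 2 μ) :
    (∫ ω, (f (fun i => X i ω)) ^ 2 ∂μ) - (∫ ω, f (fun i => X i ω) ∂μ) ^ 2
      = (1 / (2 * n)) * ∑ k ∈ Finset.range n, ∑ i : Fin n,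
          ((Nat.choose (n - 1) k : ℝ))⁻¹ *
            ∑ A ∈ Finset.powersetCard k (Finset.univ.erase i),
              ∫ ω, (f (perturbedVec n X X' ∅ ω) - f (perturbedVec n X X' {i} ω))
                * (f (perturbedVec n X X' A ω) - f (perturbedVec n X X' (insert i A) ω)) ∂μ := by
  have hexch := perturbationExchangeable hmX hmX' hindep hident
  have hL2' : MemLp (fun ω => f (perturbedVec n X X' ∅ ω)) 2 μ := by
    simpa only [perturbedVec_empty] using hL2
  set J : Finset (Fin n) → ℝ :=
    fun A => ∫ ω, f (perturbedVec n X X' ∅ ω) * f (perturbedVec n X X' A ω) ∂μ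
  have hterm (k : ℕ) (i : Fin n) (A) (hA : A ∈ powersetCard k (univ.erase i)) :
      ∫ ω, (f (perturbedVec n X X' ∅ ω) - f (perturbedVec n X X' {i} ω))
          * (f (perturbedVec n X X' A ω) - f (perturbedVec n X X' (insert i A) ω)) ∂μ
        = 2 * J A - 2 * J (insert i A) :=
    integral_sub_mul_sub_perturbedVec hexch hf hL2' (subset_erase.1 (mem_powersetCard.1 hA).1).2
  have htel := sum_range_inv_choose_mul_sum_powersetCard_sub_insert (fun A => 2 * J A)
  rw [Fintype.card_fin] at htel
  rw [sum_congr rfl fun k _ => sum_congr rfl fun i _ => congrArg _ (sum_congr rfl (hterm k i)),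
    htel]
  have hJ_empty : J ∅ = ∫ ω, f (fun i => X i ω) ^ 2 ∂μ := by simp [J, perturbedVec_empty, sq]
  have hJ_univ : J univ = (∫ ω, f (fun i => X i ω) ∂μ) ^ 2 :=
    (integral_mul_perturbedVec_univ hmX hmX' hindep hexch hf).trans
      (by simp only [perturbedVec_empty])
  rw [hJ_empty, hJ_univ]
  field_simp

/-- Variance decomposition: with
`T_k = Σ_i C(n−1,k)⁻¹ Σ_{A ⊆ [n]∖{i}, |A| = k} E[Δ_i f · Δ_i f^A]`,
one has `Var(f(X)) = (1/(2n)) Σ_{k=0}^{n−1} T_k`. -/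
theorem stmt_17 {Ω : Type*} [MeasurableSpace Ω] (μ : Measure Ω) [IsProbabilityMeasure μ]
    (n : ℕ) (hn : 0 < n) (X X' : Fin n → Ω → ℝ)
    (hmX : ∀ i, Measurable (X i)) (hmX' : ∀ i, Measurable (X' i))
    (hindep : iIndepFun (Sum.elim X X') μ)
    (hident : ∀ i, IdentDistrib (X i) (X' i) μ μ)
    (f : (Fin n → ℝ) → ℝ) (hf : Measurable f)
    (hL2 : MemLp (fun ω => f (fun i => X i ω)) 2 μ) :
    (∫ ω, (f (fun i => X i ω)) ^ 2 ∂μ) - (∫ ω, f (fun i => X i ω) ∂μ) ^ 2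
      = (1 / (2 * n)) * ∑ k ∈ Finset.range n, ∑ i : Fin n,
          ((Nat.choose (n - 1) k : ℝ))⁻¹ *
            ∑ A ∈ Finset.powersetCard k (Finset.univ.erase i),
              ∫ ω, (f (perturbedVec n X X' ∅ ω) - f (perturbedVec n X X' {i} ω))
                * (f (perturbedVec n X X' A ω) - f (perturbedVec n X X' (insert i A) ω)) ∂μ :=
  stmt_17_general μ n hn X X' hmX hmX' hindep hident f hf hL2
end
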